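/- Suppose Z = [X; Y] ∈ ℝ^{(n₁+n₂)×r} is aligned with Z⋆, i.e., the identity matrix I_r is a minimizer of ‖XP − X⋆‖_F² + ‖YP⁻ᵀ − Y⋆‖_F² over invertible P ∈ ℝ^{r×r}. Then ⟨X − X⋆, (XYᵀ − M⋆)Y⟩ ≥ ‖Y(X − X⋆)ᵀ‖_F² − ¼‖X − X⋆‖_F⁴, and similarly ⟨Y − Y⋆, (XYᵀ − M⋆)ᵀX⟩ ≥ ‖X(Y − Y⋆)ᵀ‖_F² − ¼‖Y − Y⋆‖_F⁴. -/

import Mathlib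

/-!
Write `Δ = X - X⋆`, `Γ = Y - Y⋆`. Comparing the alignment objective at `I` with its value at
`P = I + tG` for small `t` shows that its derivative `2⟪XᵀΔ - ΓᵀY, G⟫` vanishes for every `G`,
so `XᵀΔ = ΓᵀY =: B`. Since `M⋆ = X⋆Y⋆ᵀ`, the gradient term splits as
`⟪Δ, ΔYᵀY⟫ + ⟪X⋆ᵀΔ, B⟫ = ‖YΔᵀ‖² + ⟪B - ΔᵀΔ, B⟫`, and completing the square,
`⟪B - C, B⟫ ≥ -¼‖C‖²`, together with `‖ΔᵀΔ‖ ≤ ‖Δ‖²` gives the bound. The second inequality is the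
first one for the transposed factorization `M⋆ᵀ = Y⋆X⋆ᵀ`, whose balance condition is the transpose
of `XᵀΔ = ΓᵀY`.
-/

open Matrix BigOperators

/-- Frobenius norm of a real matrix. -/
noncomputable def frobNorm {m n : ℕ} (A : Matrix (Fin m) (Fin n) ℝ) : ℝ :=
  Real.sqrt (∑ i, ∑ j, (A i j) ^ 2)

/-- Spectral norm (largest singular value) of a real matrix. -/
noncomputable def specNorm {m n : ℕ} (A : Matrix (Fin m) (Fin n) ℝ) : ℝ :=
  ‖LinearMap.toContinuousLinearMap (Matrix.toEuclideanLin A)‖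

/-- Smallest singular value of a matrix with `r` columns (the `r`-th largest singular value). -/
noncomputable def sigmaMinCol {m r : ℕ} (A : Matrix (Fin m) (Fin r) ℝ) : ℝ :=
  sInf { s | ∃ v : EuclideanSpace ℝ (Fin r), ‖v‖ = 1 ∧ s = ‖Matrix.toEuclideanLin A v‖ }

/-- Matrix inner product `⟨A, B⟩ = Tr(Bᵀ A)`. -/
noncomputable def matInner {m n : ℕ} (A B : Matrix (Fin m) (Fin n) ℝ) : ℝ :=
  Matrix.trace (Bᵀ * A)

/-- Euclidean norm on `ℝ^m`. -/
noncomputable def vec2Norm {m : ℕ} (y : Fin m → ℝ) : ℝ :=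
  Real.sqrt (∑ i, (y i) ^ 2)

/-- The sensing operator `𝒜(M) = (⟨A_i, M⟩)_{i=1..m}`. -/
noncomputable def senseOp {n₁ n₂ m : ℕ} (As : Fin m → Matrix (Fin n₁) (Fin n₂) ℝ)
    (M : Matrix (Fin n₁) (Fin n₂) ℝ) : Fin m → ℝ :=
  fun i => matInner (As i) M

/-- The adjoint operator `𝒜*(y) = ∑ i, y i • A i`. -/
noncomputable def senseAdj {n₁ n₂ m : ℕ} (As : Fin m → Matrix (Fin n₁) (Fin n₂) ℝ)
    (y : Fin m → ℝ) : Matrix (Fin n₁) (Fin n₂) ℝ :=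
  ∑ i, y i • As i

/-- Rank-`k` restricted isometry property with constant `δ`. -/
def HasRIP {n₁ n₂ m : ℕ} (As : Fin m → Matrix (Fin n₁) (Fin n₂) ℝ) (k : ℕ) (δ : ℝ) : Prop :=
  0 ≤ δ ∧ δ < 1 ∧
  ∀ M : Matrix (Fin n₁) (Fin n₂) ℝ, M.rank ≤ k →
    (1 - δ) * (frobNorm M) ^ 2 ≤ (vec2Norm (senseOp As M)) ^ 2 ∧
    (vec2Norm (senseOp As M)) ^ 2 ≤ (1 + δ) * (frobNorm M) ^ 2

/-- dist(Z, Z⋆): infimum over invertible `P` of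
`sqrt(‖XP − X⋆‖_F² + ‖YP⁻ᵀ − Y⋆‖_F²)`. -/
noncomputable def distZ {n₁ n₂ r : ℕ} (X Xs : Matrix (Fin n₁) (Fin r) ℝ)
    (Y Ys : Matrix (Fin n₂) (Fin r) ℝ) : ℝ :=
  sInf { v | ∃ P : Matrix (Fin r) (Fin r) ℝ, IsUnit P ∧
    v = Real.sqrt ((frobNorm (X * P - Xs)) ^ 2 + (frobNorm (Y * (P⁻¹)ᵀ - Ys)) ^ 2) }

open Filter Topology

section FrobeniusInner

variable {l m n : ℕ}

lemma matInner_comm (A B : Matrix (Fin m) (Fin n) ℝ) : matInner A B = matInner B A := by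
  rw [matInner, matInner, ← trace_transpose, transpose_mul, transpose_transpose]

@[simp]
lemma matInner_add_left (A B C : Matrix (Fin m) (Fin n) ℝ) :
    matInner (A + B) C = matInner A C + matInner B C := by
  simp [matInner, Matrix.mul_add]

@[simp]
lemma matInner_smul_left (t : ℝ) (A B : Matrix (Fin m) (Fin n) ℝ) :
    matInner (t • A) B = t * matInner A B := by
  simp [matInner]

@[simp]
lemma matInner_sub_left (A B C : Matrix (Fin m) (Fin n) ℝ) :
    matInner (A - B) C = matInner A C - matInner B C := by
  simp [matInner, Matrix.mul_sub]

@[simp]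
lemma matInner_add_right (A B C : Matrix (Fin m) (Fin n) ℝ) :
    matInner A (B + C) = matInner A B + matInner A C := by
  simp [matInner, Matrix.add_mul]

@[simp]
lemma matInner_smul_right (t : ℝ) (A B : Matrix (Fin m) (Fin n) ℝ) :
    matInner A (t • B) = t * matInner A B := by
  simp [matInner]

lemma matInner_self (A : Matrix (Fin m) (Fin n) ℝ) : matInner A A = frobNorm A ^ 2 := by
  rw [frobNorm, Real.sq_sqrt (by positivity), matInner, trace, Finset.sum_comm]
  simp [mul_apply, sq]

lemma matInner_mul_left (A : Matrix (Fin l) (Fin n) ℝ) (B : Matrix (Fin l) (Fin m) ℝ)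
    (C : Matrix (Fin m) (Fin n) ℝ) : matInner A (B * C) = matInner (Bᵀ * A) C := by
  rw [matInner, matInner, transpose_mul, Matrix.mul_assoc]

lemma matInner_transpose (A B : Matrix (Fin m) (Fin n) ℝ) : matInner Aᵀ Bᵀ = matInner A B := by
  rw [matInner, matInner, transpose_transpose, trace_mul_comm, ← trace_transpose, transpose_mul,
    transpose_transpose]

lemma frobNorm_add_smul_sq (A B : Matrix (Fin m) (Fin n) ℝ) (t : ℝ) :
    frobNorm (A + t • B) ^ 2 =
      frobNorm A ^ 2 + 2 * t * matInner A B + t ^ 2 * frobNorm B ^ 2 := by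
  simp only [← matInner_self, matInner_add_left, matInner_add_right, matInner_smul_left,
    matInner_smul_right, matInner_comm B A]
  ring

open scoped Matrix.Norms.Frobenius in
lemma frobNorm_eq_norm (A : Matrix (Fin m) (Fin n) ℝ) : frobNorm A = ‖A‖ := by
  rw [frobNorm, frobenius_norm_def, Real.sqrt_eq_rpow]
  simp

open scoped Matrix.Norms.Frobenius in
lemma frobNorm_mul_le (A : Matrix (Fin l) (Fin m) ℝ) (B : Matrix (Fin m) (Fin n) ℝ) :
    frobNorm (A * B) ≤ frobNorm A * frobNorm B := by
  simpa only [frobNorm_eq_norm] using frobenius_norm_mul A B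

open scoped Matrix.Norms.Frobenius in
lemma frobNorm_transpose (A : Matrix (Fin m) (Fin n) ℝ) : frobNorm Aᵀ = frobNorm A := by
  simpa only [frobNorm_eq_norm] using frobenius_norm_transpose A

open scoped Matrix.Norms.Frobenius in
lemma eq_zero_of_matInner_self_eq_zero {A : Matrix (Fin m) (Fin n) ℝ} (h : matInner A A = 0) :
    A = 0 := by
  rwa [matInner_self, frobNorm_eq_norm, sq_eq_zero_iff, norm_eq_zero] at h

lemma ContinuousAt.matInner {α : Type*} [TopologicalSpace α]
    {f g : α → Matrix (Fin m) (Fin n) ℝ} {x : α} (hf : ContinuousAt f x) (hg : ContinuousAt g x) :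
    ContinuousAt (fun a => _root_.matInner (f a) (g a)) x := by
  unfold _root_.matInner; fun_prop

lemma neg_quarter_frobNorm_sq_le_matInner_sub (B C : Matrix (Fin m) (Fin n) ℝ) :
    -(1 / 4) * frobNorm C ^ 2 ≤ matInner (B - C) B := by
  have hsquare :
      matInner (B - C) B + 1 / 4 * frobNorm C ^ 2 = frobNorm (B + (-1 / 2 : ℝ) • C) ^ 2 := by
    rw [frobNorm_add_smul_sq, sub_eq_add_neg, ← neg_one_smul ℝ C, matInner_add_left,
      matInner_smul_left, matInner_self, matInner_comm]
    ring
  linarith [sq_nonneg (frobNorm (B + (-1 / 2 : ℝ) • C))]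

lemma frobNorm_transpose_mul_self_le (A : Matrix (Fin m) (Fin n) ℝ) :
    frobNorm (Aᵀ * A) ≤ frobNorm A ^ 2 := by
  simpa only [frobNorm_transpose, sq] using frobNorm_mul_le Aᵀ A

end FrobeniusInner

theorem le_matInner_of_balanced {n₁ n₂ r : ℕ} {X Xs : Matrix (Fin n₁) (Fin r) ℝ}
    {Y Ys : Matrix (Fin n₂) (Fin r) ℝ} (hbal : Xᵀ * (X - Xs) = (Y - Ys)ᵀ * Y) :
    frobNorm (Y * (X - Xs)ᵀ) ^ 2 - 1 / 4 * frobNorm (X - Xs) ^ 4 ≤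
      matInner (X - Xs) ((X * Yᵀ - Xs * Ysᵀ) * Y) := by
  set Δ := X - Xs
  set B := (Y - Ys)ᵀ * Y
  have hsplit : (X * Yᵀ - Xs * Ysᵀ) * Y = Δ * (Yᵀ * Y) + Xs * B := by
    simp only [Δ, B, transpose_sub, Matrix.sub_mul, Matrix.mul_sub, Matrix.mul_assoc]
    abel
  have hXs : Xsᵀ * Δ = B - Δᵀ * Δ := by
    rw [← hbal, ← Matrix.sub_mul, ← transpose_sub, sub_sub_cancel]
  have hfirst : matInner Δ (Δ * (Yᵀ * Y)) = frobNorm (Y * Δᵀ) ^ 2 := by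
    rw [matInner_comm, ← matInner_transpose, ← matInner_self, matInner_mul_left]
    simp only [transpose_mul, transpose_transpose, Matrix.mul_assoc]
  have hsecond : matInner Δ (Xs * B) = matInner (B - Δᵀ * Δ) B := by
    rw [matInner_mul_left, hXs]
  have hquartic : frobNorm (Δᵀ * Δ) ^ 2 ≤ frobNorm Δ ^ 4 := by
    rw [show frobNorm Δ ^ 4 = (frobNorm Δ ^ 2) ^ 2 by ring]
    exact pow_le_pow_left₀ (by rw [frobNorm]; positivity) (frobNorm_transpose_mul_self_le Δ) 2
  rw [hsplit, matInner_add_right, hfirst, hsecond]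
  linarith [neg_quarter_frobNorm_sq_le_matInner_sub B (Δᵀ * Δ)]

lemma eq_zero_of_eventually_nonneg_mul {c : ℝ → ℝ} (hc : ContinuousAt c 0)
    (h : ∀ᶠ t in 𝓝 0, 0 ≤ t * c t) : c 0 = 0 := by
  apply le_antisymm
  · refine le_of_tendsto (hc.tendsto.mono_left (nhdsWithin_le_nhds (s := Set.Iio 0))) ?_
    filter_upwards [nhdsWithin_le_nhds h, self_mem_nhdsWithin] with t ht htneg
    exact nonpos_of_mul_nonneg_right ht htneg
  · refine ge_of_tendsto (hc.tendsto.mono_left (nhdsWithin_le_nhds (s := Set.Ioi 0))) ?_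
    filter_upwards [nhdsWithin_le_nhds h, self_mem_nhdsWithin] with t ht htpos
    exact nonneg_of_mul_nonneg_right ht htpos

section OneAddSmul

variable {ι : Type*} [Fintype ι] [DecidableEq ι]

lemma inv_one_add_smul_eq {R : Type*} [CommRing R] (G : Matrix ι ι R) (t : R)
    (h : IsUnit (1 + t • G)) : (1 + t • G)⁻¹ = 1 - t • (G * (1 + t • G)⁻¹) := by
  rw [eq_sub_iff_add_eq]
  calc _ = (1 + t • G) * (1 + t • G)⁻¹ := by rw [Matrix.add_mul, Matrix.one_mul, Matrix.smul_mul]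
    _ = 1 := mul_nonsing_inv _ ((isUnit_iff_isUnit_det _).mp h)

lemma det_one_add_smul_ne_zero_eventually (G : Matrix ι ι ℝ) :
    ∀ᶠ t in 𝓝 (0 : ℝ), (1 + t • G).det ≠ 0 :=
  (Continuous.matrix_det (by fun_prop)).continuousAt.eventually_ne (by simp)

lemma continuousAt_inv_one_add_smul (G : Matrix ι ι ℝ) :
    ContinuousAt (fun t : ℝ => (1 + t • G)⁻¹) 0 := by
  refine (continuousAt_matrix_inv _ ?_).comp (f := fun t : ℝ => 1 + t • G) (by fun_prop)
  rw [Ring.inverse_eq_inv']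
  exact continuousAt_inv₀ (by simp)

end OneAddSmul

theorem transpose_mul_sub_eq_of_aligned {n₁ n₂ r : ℕ} {X Xs : Matrix (Fin n₁) (Fin r) ℝ}
    {Y Ys : Matrix (Fin n₂) (Fin r) ℝ}
    (haligned : ∀ P : Matrix (Fin r) (Fin r) ℝ, IsUnit P →
      frobNorm (X - Xs) ^ 2 + frobNorm (Y - Ys) ^ 2 ≤
        frobNorm (X * P - Xs) ^ 2 + frobNorm (Y * (P⁻¹)ᵀ - Ys) ^ 2) :
    Xᵀ * (X - Xs) = (Y - Ys)ᵀ * Y := by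
  set Δ := X - Xs
  set Γ := Y - Ys
  set G := Xᵀ * Δ - Γᵀ * Y
  let R : ℝ → Matrix (Fin n₂) (Fin r) ℝ := fun t => Y * (G * (1 + t • G)⁻¹)ᵀ
  -- Perturbing in the direction `G` itself: `t * c t` is the increase of the alignment objective
  -- at `1 + t • G`, and `c 0 = 2 ⟪G, G⟫`.
  let c : ℝ → ℝ := fun t => 2 * (matInner Δ (X * G) - matInner Γ (R t)) +
    t * (matInner (X * G) (X * G) + matInner (R t) (R t))
  have hR : ContinuousAt R 0 :=
    (continuous_const.matrix_mul (continuous_const.matrix_mul continuous_id).matrix_transpose)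
      |>.continuousAt.comp (continuousAt_inv_one_add_smul G)
  have hc : ContinuousAt c 0 :=
    (continuousAt_const.mul (continuousAt_const.sub (continuousAt_const.matInner hR))).add
      (continuousAt_id.mul (continuousAt_const.add (hR.matInner hR)))
  have hperturb : ∀ᶠ t in 𝓝 0, 0 ≤ t * c t := by
    filter_upwards [det_one_add_smul_ne_zero_eventually G] with t ht
    have hunit : IsUnit (1 + t • G) := (isUnit_iff_isUnit_det _).mpr ht.isUnit
    have hX : X * (1 + t • G) - Xs = Δ + t • (X * G) := by
      simp only [Δ, Matrix.mul_add, Matrix.mul_one, Matrix.mul_smul]; abel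
    have hY : Y * ((1 + t • G)⁻¹)ᵀ - Ys = Γ + (-t) • R t := by
      have hYinv : Y * ((1 + t • G)⁻¹)ᵀ = Y - t • R t := by
        conv_lhs => rw [inv_one_add_smul_eq G t hunit]
        simp only [R, transpose_sub, transpose_one, transpose_smul, Matrix.mul_sub,
          Matrix.mul_one, Matrix.mul_smul]
      rw [hYinv, neg_smul, ← sub_eq_add_neg, sub_right_comm]
    have hmin := haligned _ hunit
    rw [hX, hY, frobNorm_add_smul_sq, frobNorm_add_smul_sq] at hmin
    simp only [← matInner_self] at hmin
    have hexpand : t * c t = 2 * t * matInner Δ (X * G) + t ^ 2 * matInner (X * G) (X * G) +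
        (2 * -t * matInner Γ (R t) + (-t) ^ 2 * matInner (R t) (R t)) := by
      simp only [c]; ring
    linarith
  have hc0 : c 0 = 2 * matInner G G := by
    have hGt : matInner Γ (Y * Gᵀ) = matInner (Γᵀ * Y) G := by
      rw [matInner_mul_left, ← matInner_transpose, transpose_mul, transpose_transpose,
        transpose_transpose]
    simp only [c, R, zero_smul, add_zero, inv_one, Matrix.mul_one, zero_mul]
    rw [hGt, matInner_mul_left, ← matInner_sub_left]
  exact sub_eq_zero.mp (eq_zero_of_matInner_self_eq_zero
    (by linarith [eq_zero_of_eventually_nonneg_mul hc hperturb]))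

lemma mul_diagonal_mul_transpose_eq_sqrt {m n r : Type*} [Fintype r] [DecidableEq r]
    (U : Matrix m r ℝ) (V : Matrix n r ℝ) {d : r → ℝ} (hd : ∀ i, 0 ≤ d i) :
    U * diagonal d * Vᵀ =
      (U * diagonal fun i => √(d i)) * (V * diagonal fun i => √(d i))ᵀ := by
  rw [transpose_mul, diagonal_transpose, ← Matrix.mul_assoc]
  congr 1
  rw [Matrix.mul_assoc, diagonal_mul_diagonal]
  simp only [Real.mul_self_sqrt (hd _)]

theorem gradient_dominance_general
    {n₁ n₂ r : ℕ}
    (Ustar : Matrix (Fin n₁) (Fin r) ℝ) (Vstar : Matrix (Fin n₂) (Fin r) ℝ)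
    (d : Fin r → ℝ) (hd : ∀ i, 0 < d i)
    (Mstar : Matrix (Fin n₁) (Fin n₂) ℝ)
    (hM : Mstar = Ustar * Matrix.diagonal d * Vstarᵀ)
    (Xstar : Matrix (Fin n₁) (Fin r) ℝ) (Ystar : Matrix (Fin n₂) (Fin r) ℝ)
    (hXs : Xstar = Ustar * Matrix.diagonal (fun i => Real.sqrt (d i)))
    (hYs : Ystar = Vstar * Matrix.diagonal (fun i => Real.sqrt (d i)))
    (X : Matrix (Fin n₁) (Fin r) ℝ) (Y : Matrix (Fin n₂) (Fin r) ℝ)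
    (haligned : ∀ P : Matrix (Fin r) (Fin r) ℝ, IsUnit P →
      (frobNorm (X - Xstar)) ^ 2 + (frobNorm (Y - Ystar)) ^ 2 ≤
        (frobNorm (X * P - Xstar)) ^ 2 + (frobNorm (Y * (P⁻¹)ᵀ - Ystar)) ^ 2) :
    matInner (X - Xstar) ((X * Yᵀ - Mstar) * Y) ≥
      (frobNorm (Y * (X - Xstar)ᵀ)) ^ 2 - (1 / 4) * (frobNorm (X - Xstar)) ^ 4 ∧
    matInner (Y - Ystar) ((X * Yᵀ - Mstar)ᵀ * X) ≥
      (frobNorm (X * (Y - Ystar)ᵀ)) ^ 2 - (1 / 4) * (frobNorm (Y - Ystar)) ^ 4 := by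
  have hMstar : Mstar = Xstar * Ystarᵀ := by
    rw [hM, hXs, hYs, mul_diagonal_mul_transpose_eq_sqrt Ustar Vstar fun i => (hd i).le]
  have hbal : Xᵀ * (X - Xstar) = (Y - Ystar)ᵀ * Y := transpose_mul_sub_eq_of_aligned haligned
  have hbal' : Yᵀ * (Y - Ystar) = (X - Xstar)ᵀ * X := by
    simpa only [transpose_mul, transpose_transpose] using (congrArg transpose hbal).symm
  have hswap : (X * Yᵀ - Xstar * Ystarᵀ)ᵀ = Y * Xᵀ - Ystar * Xstarᵀ := by
    rw [transpose_sub, transpose_mul, transpose_mul, transpose_transpose, transpose_transpose]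
  rw [hMstar, hswap]
  exact ⟨le_matInner_of_balanced hbal, le_matInner_of_balanced hbal'⟩

/-- Lemma 3, gradient dominance: if `Z = [X; Y]` is aligned with
`Z⋆` (the identity minimizes the alignment objective over invertible matrices), then
`⟨X − X⋆, (XYᵀ − M⋆)Y⟩ ≥ ‖Y(X − X⋆)ᵀ‖_F² − ¼‖X − X⋆‖_F⁴` and
`⟨Y − Y⋆, (XYᵀ − M⋆)ᵀX⟩ ≥ ‖X(Y − Y⋆)ᵀ‖_F² − ¼‖Y − Y⋆‖_F⁴`. -/
theorem gradient_dominance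
    {n₁ n₂ r : ℕ}
    (Ustar : Matrix (Fin n₁) (Fin r) ℝ) (Vstar : Matrix (Fin n₂) (Fin r) ℝ)
    (d : Fin r → ℝ) (hd : ∀ i, 0 < d i)
    (hU : Ustarᵀ * Ustar = 1) (hV : Vstarᵀ * Vstar = 1)
    (Mstar : Matrix (Fin n₁) (Fin n₂) ℝ)
    (hM : Mstar = Ustar * Matrix.diagonal d * Vstarᵀ)
    (Xstar : Matrix (Fin n₁) (Fin r) ℝ) (Ystar : Matrix (Fin n₂) (Fin r) ℝ)
    (hXs : Xstar = Ustar * Matrix.diagonal (fun i => Real.sqrt (d i)))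
    (hYs : Ystar = Vstar * Matrix.diagonal (fun i => Real.sqrt (d i)))
    (X : Matrix (Fin n₁) (Fin r) ℝ) (Y : Matrix (Fin n₂) (Fin r) ℝ)
    (haligned : ∀ P : Matrix (Fin r) (Fin r) ℝ, IsUnit P →
      (frobNorm (X - Xstar)) ^ 2 + (frobNorm (Y - Ystar)) ^ 2 ≤
        (frobNorm (X * P - Xstar)) ^ 2 + (frobNorm (Y * (P⁻¹)ᵀ - Ystar)) ^ 2) :
    matInner (X - Xstar) ((X * Yᵀ - Mstar) * Y) ≥
      (frobNorm (Y * (X - Xstar)ᵀ)) ^ 2 - (1 / 4) * (frobNorm (X - Xstar)) ^ 4 ∧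
    matInner (Y - Ystar) ((X * Yᵀ - Mstar)ᵀ * X) ≥
      (frobNorm (X * (Y - Ystar)ᵀ)) ^ 2 - (1 / 4) * (frobNorm (Y - Ystar)) ^ 4 :=
  gradient_dominance_general Ustar Vstar d hd Mstar hM Xstar Ystar hXs hYs X Y haligned
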